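/- arXiv:2112.01602 — 5 statements merged into one kernel-verified Lean document; each statement's English description precedes it below -/
import Mathlib

section
/- Let 0 < ω < K. For the triangular characteristic v_e, the constant β₀ := − (∫₀^{2π} (v_e(σ) − ω/K) dσ) / (∫₀^{2π} |v_e(σ) − ω/K| dσ) equals 2ωK/(ω² + K²), and in particular 0 < β₀ ≤ 1. -/
/-!
On one period the triangular wave runs linearly through `[-1, 1]` once upwards and once
downwards, both times with slope of modulus `2/π`, so `∫₀^{2π} g(v σ) dσ = π ∫₋₁¹ g(t) dt`
for every continuous `g`. Taking `g t = t - c` and `g t = |t - c|` with `c = ω/K ∈ (0, 1)`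
gives the numerator `2πc` and the denominator `π(1 + c²)`, hence `β₀ = 2c/(1 + c²)`.
-/

open Real Set MeasureTheory intervalIntegral

theorem integral_comp_of_eqOn_affine {v g : ℝ → ℝ} {a b m q : ℝ} (hm : m ≠ 0)
    (hv : EqOn v (fun θ => m * θ + q) (uIcc a b)) :
    ∫ θ in a..b, g (v θ) = m⁻¹ * ∫ x in m * a + q..m * b + q, g x := by
  rw [integral_congr fun θ hθ => congrArg g (hv hθ)]
  exact integral_comp_mul_add (fun x => g x) hm q

theorem intervalIntegrable_comp_of_eqOn_affine {v g : ℝ → ℝ} {a b m q : ℝ}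
    (hg : Continuous g) (hv : EqOn v (fun θ => m * θ + q) (uIcc a b)) :
    IntervalIntegrable (fun θ => g (v θ)) volume a b :=
  ((hg.comp (continuous_const_mul m |>.add continuous_const)).continuousOn.congr
    fun _ hθ => congrArg g (hv hθ)).intervalIntegrable

theorem integral_abs_sub {a b c : ℝ} (hac : a ≤ c) (hcb : c ≤ b) :
    ∫ t in a..b, |t - c| = ((c - a) ^ 2 + (b - c) ^ 2) / 2 := by
  have hleft : EqOn (fun t => |t - c|) (fun t => c - t) (uIcc a c) := fun t ht => by
    rw [uIcc_of_le hac] at ht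
    exact abs_of_nonpos (sub_nonpos.2 ht.2) |>.trans (neg_sub t c)
  have hright : EqOn (fun t => |t - c|) (fun t => t - c) (uIcc c b) := fun t ht => by
    rw [uIcc_of_le hcb] at ht
    exact abs_of_nonneg (sub_nonneg.2 ht.1)
  have hcont : Continuous fun t : ℝ => |t - c| := by fun_prop
  rw [← integral_add_adjacent_intervals (hcont.intervalIntegrable a c)
      (hcont.intervalIntegrable c b), integral_congr hleft, integral_congr hright,
    integral_sub intervalIntegrable_const intervalIntegrable_id,
    integral_sub intervalIntegrable_id intervalIntegrable_const,
    integral_id, integral_id, intervalIntegral.integral_const, intervalIntegral.integral_const]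
  simp only [smul_eq_mul]
  ring

namespace TriangleWave

variable {v : ℝ → ℝ} (hper : ∀ θ : ℝ, v (θ + 2*π) = v θ)
    (hA : ∀ θ : ℝ, -(π/2) ≤ θ → θ < π/2 → v θ = (2/π)*θ)
    (hB : ∀ θ : ℝ, π/2 ≤ θ → θ < 3*π/2 → v θ = -(2/π)*θ + 2)

include hA hB in
theorem eqOn_rising : EqOn v (fun θ => 2 / π * θ + 0) (uIcc (-(π/2)) (π/2)) := by
  intro θ hθ
  rw [uIcc_of_le (by linarith [pi_pos])] at hθ
  rcases hθ.2.lt_or_eq with h | rfl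
  · simp [hA θ hθ.1 h]
  · rw [hB _ le_rfl (by linarith [pi_pos])]
    field_simp
    ring

include hper hA hB in
theorem eqOn_falling : EqOn v (fun θ => -(2 / π) * θ + 2) (uIcc (π/2) (3*π/2)) := by
  intro θ hθ
  rw [uIcc_of_le (by linarith [pi_pos])] at hθ
  rcases hθ.2.lt_or_eq with h | rfl
  · exact hB θ hθ.1 h
  · rw [show 3 * π / 2 = -(π/2) + 2 * π by ring, hper, hA _ le_rfl (by linarith [pi_pos])]
    field_simp
    ring

include hper hA hB in
theorem integral_comp {g : ℝ → ℝ} (hg : Continuous g) :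
    ∫ σ in (0:ℝ)..2*π, g (v σ) = π * ∫ t in (-1:ℝ)..1, g t := by
  have rise := eqOn_rising hA hB
  have fall := eqOn_falling hper hA hB
  have hperiodic : Function.Periodic (fun σ => g (v σ)) (2*π) := fun σ => by simp only [hper]
  have hrise : ∫ σ in -(π/2)..π/2, g (v σ) = π / 2 * ∫ t in (-1:ℝ)..1, g t := by
    rw [integral_comp_of_eqOn_affine (by positivity) rise]
    field_simp
    norm_num
  have hfall : ∫ σ in π/2..3*π/2, g (v σ) = π / 2 * ∫ t in (-1:ℝ)..1, g t := by
    rw [integral_comp_of_eqOn_affine (by simp [pi_ne_zero]) fall, integral_symm]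
    field_simp
    norm_num
  calc ∫ σ in (0:ℝ)..2*π, g (v σ) = ∫ σ in -(π/2)..-(π/2) + 2*π, g (v σ) := by
        simpa using hperiodic.intervalIntegral_add_eq 0 (-(π/2))
  _ = (∫ σ in -(π/2)..π/2, g (v σ)) + ∫ σ in π/2..3*π/2, g (v σ) := by
        rw [integral_add_adjacent_intervals (intervalIntegrable_comp_of_eqOn_affine hg rise)
          (intervalIntegrable_comp_of_eqOn_affine hg fall)]
        ring_nf
  _ = π * ∫ t in (-1:ℝ)..1, g t := by rw [hrise, hfall]; ring

end TriangleWave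

/-- For the triangular characteristic, the constant β₀ equals 2ωK/(ω²+K²),
and 0 < β₀ ≤ 1. -/
theorem beta0_value (v : ℝ → ℝ)
    (hper : ∀ θ : ℝ, v (θ + 2*π) = v θ)
    (hA : ∀ θ : ℝ, -(π/2) ≤ θ → θ < π/2 → v θ = (2/π)*θ)
    (hB : ∀ θ : ℝ, π/2 ≤ θ → θ < 3*π/2 → v θ = -(2/π)*θ + 2)
    (K ω : ℝ) (hK : 0 < K) (hω0 : 0 < ω) (hωK : ω < K) :
    -(∫ σ in (0:ℝ)..(2*π), (v σ - ω/K)) / (∫ σ in (0:ℝ)..(2*π), |v σ - ω/K|)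
      = 2*ω*K/(ω^2 + K^2) ∧
    0 < 2*ω*K/(ω^2 + K^2) ∧ 2*ω*K/(ω^2 + K^2) ≤ 1 := by
  set c := ω / K with hc
  have hc0 : 0 < c := div_pos hω0 hK
  have hc1 : c < 1 := (div_lt_one hK).2 hωK
  have hmean : ∫ σ in (0:ℝ)..2*π, (v σ - c) = -(2 * π * c) := by
    rw [TriangleWave.integral_comp hper hA hB (g := fun t => t - c) (by fun_prop),
      integral_sub intervalIntegrable_id intervalIntegrable_const,
      integral_id, intervalIntegral.integral_const, smul_eq_mul]
    ring
  have habs : ∫ σ in (0:ℝ)..2*π, |v σ - c| = π * (1 + c ^ 2) := by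
    rw [TriangleWave.integral_comp hper hA hB (g := fun t => |t - c|) (by fun_prop),
      integral_abs_sub (by linarith) hc1.le]
    ring
  refine ⟨?_, by positivity, ?_⟩
  · rw [hmean, habs, hc]
    field_simp
    ring
  · rw [div_le_one (by positivity)]
    nlinarith [sq_nonneg (ω - K)]
end

section
/- The function V(x, θ) = (1/2)(x − τ₁ω/K)² + (τ₁/K) ∫₀^{θ} ( v_e(σ) − ω/K + β₀ |v_e(σ) − ω/K| ) dσ, with β₀ = 2ωK/(ω²+K²), is 2π-periodic in θ: V(x, θ + 2π) = V(x, θ) for all x, θ ∈ ℝ. -/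
/-!
The difference `V(x, θ + 2π) - V(x, θ)` is `τ₁/K` times the integral of the integrand over one
period. On each of its two monotone pieces the triangle wave is affine of slope `±2/π` onto
`[-1, 1]`, so integrating `g ∘ v_e` over a period gives `π ∫_{-1}^{1} g`. For
`g u = u - c + β |u - c|` with `c = ω/K ∈ [-1, 1]` this is `π (β (1 + c²) - 2c)`, and
`β₀ = 2c / (1 + c²)` is exactly the value that makes it vanish.
-/

open Real Set MeasureTheory intervalIntegral

theorem Function.Periodic.periodic_intervalIntegral_of_integral_eq_zero {E : Type*}
    [NormedAddCommGroup E] [NormedSpace ℝ E] {f : ℝ → E} {T : ℝ} (hf : Function.Periodic f T)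
    (h_int : ∀ a b, IntervalIntegrable f volume a b) (a t : ℝ) (h0 : ∫ x in t..t + T, f x = 0) :
    Function.Periodic (fun s => ∫ x in a..s, f x) T := by
  intro s
  simp only [hf.intervalIntegral_add_eq_add a s h_int, hf.intervalIntegral_add_eq a t, h0,
    add_zero]

theorem integral_abs_sub_of_mem_Icc {a b c : ℝ} (hc : c ∈ Icc a b) :
    ∫ u in a..b, |u - c| = ((c - a) ^ 2 + (b - c) ^ 2) / 2 := by
  have h_int : ∀ a b : ℝ, IntervalIntegrable (fun u => |u - c|) volume a b := fun a b =>
    (by fun_prop : Continuous fun u : ℝ => |u - c|).intervalIntegrable a b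
  have h_left : ∫ u in a..c, |u - c| = ∫ u in a..c, (c - u) := by
    refine integral_congr fun u hu => ?_
    rw [uIcc_of_le hc.1] at hu
    rw [abs_of_nonpos (by linarith [hu.2]), neg_sub]
  have h_right : ∫ u in c..b, |u - c| = ∫ u in c..b, (u - c) := by
    refine integral_congr fun u hu => ?_
    rw [uIcc_of_le hc.2] at hu
    rw [abs_of_nonneg (by linarith [hu.1])]
  rw [← integral_add_adjacent_intervals (h_int _ _) (h_int _ _), h_left, h_right,
    integral_sub intervalIntegrable_const intervalIntegrable_id,
    integral_sub intervalIntegrable_id intervalIntegrable_const]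
  simp only [intervalIntegral.integral_const, integral_id, smul_eq_mul]
  ring

theorem integral_sub_add_mul_abs_sub_of_mem_Icc (β : ℝ) {c : ℝ} (hc : c ∈ Icc (-1 : ℝ) 1) :
    ∫ u in (-1 : ℝ)..1, (u - c + β * |u - c|) = β * (1 + c ^ 2) - 2 * c := by
  have h_abs : IntervalIntegrable (fun u => β * |u - c|) volume (-1) 1 :=
    (by fun_prop : Continuous fun u : ℝ => β * |u - c|).intervalIntegrable _ _
  rw [integral_add (intervalIntegrable_id.sub intervalIntegrable_const) h_abs,
    integral_sub intervalIntegrable_id intervalIntegrable_const,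
    intervalIntegral.integral_const_mul, integral_abs_sub_of_mem_Icc hc, integral_id,
    intervalIntegral.integral_const, smul_eq_mul]
  ring

structure IsTriangleWave (v : ℝ → ℝ) : Prop where
  periodic : Function.Periodic v (2 * π)
  rising : ∀ θ, -(π / 2) ≤ θ → θ < π / 2 → v θ = (2 / π) * θ
  falling : ∀ θ, π / 2 ≤ θ → θ < 3 * π / 2 → v θ = -(2 / π) * θ + 2

namespace IsTriangleWave

variable {v : ℝ → ℝ}

theorem eqOn_rising (hv : IsTriangleWave v) :
    EqOn v (fun θ => (2 / π) * θ) (Icc (-(π / 2)) (π / 2)) := by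
  intro θ hθ
  rcases hθ.2.lt_or_eq with hlt | rfl
  · exact hv.rising θ hθ.1 hlt
  · rw [hv.falling _ le_rfl (by linarith [pi_pos])]
    field_simp
    ring

theorem eqOn_falling (hv : IsTriangleWave v) :
    EqOn v (fun θ => 2 - (2 / π) * θ) (Icc (π / 2) (3 * π / 2)) := by
  intro θ hθ
  rcases hθ.2.lt_or_eq with hlt | rfl
  · rw [hv.falling θ hθ.1 hlt]
    ring
  · rw [show 3 * π / 2 = -(π / 2) + 2 * π by ring, hv.periodic,
      hv.rising _ le_rfl (by linarith [pi_pos])]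
    field_simp
    ring

theorem continuousOn_rising (hv : IsTriangleWave v) : ContinuousOn v (Icc (-(π / 2)) (π / 2)) :=
  (continuous_const_mul (2 / π)).continuousOn.congr hv.eqOn_rising

theorem continuousOn_falling (hv : IsTriangleWave v) :
    ContinuousOn v (Icc (π / 2) (3 * π / 2)) :=
  (continuous_const.sub (continuous_const_mul (2 / π))).continuousOn.congr hv.eqOn_falling

variable {E : Type*} [NormedAddCommGroup E] {g : ℝ → E}

theorem intervalIntegrable_comp_rising (hv : IsTriangleWave v) (hg : Continuous g) :
    IntervalIntegrable (fun σ => g (v σ)) volume (-(π / 2)) (π / 2) := by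
  refine (hg.comp_continuousOn ?_).intervalIntegrable
  rw [uIcc_of_le (by linarith [pi_pos])]
  exact hv.continuousOn_rising

theorem intervalIntegrable_comp_falling (hv : IsTriangleWave v) (hg : Continuous g) :
    IntervalIntegrable (fun σ => g (v σ)) volume (π / 2) (3 * π / 2) := by
  refine (hg.comp_continuousOn ?_).intervalIntegrable
  rw [uIcc_of_le (by linarith [pi_pos])]
  exact hv.continuousOn_falling

theorem intervalIntegrable_comp (hv : IsTriangleWave v) (hg : Continuous g) (a b : ℝ) :
    IntervalIntegrable (fun σ => g (v σ)) volume a b := by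
  refine (hv.periodic.comp g).intervalIntegrable (t := -(π / 2)) (by positivity) ?_ a b
  rw [show -(π / 2) + 2 * π = 3 * π / 2 by ring]
  exact (hv.intervalIntegrable_comp_rising hg).trans (hv.intervalIntegrable_comp_falling hg)

theorem integral_comp_period [NormedSpace ℝ E] (hv : IsTriangleWave v) (hg : Continuous g) :
    ∫ σ in -(π / 2)..3 * π / 2, g (v σ) = π • ∫ u in (-1 : ℝ)..1, g u := by
  have h_one : 2 / π * (π / 2) = 1 := by field_simp
  have h_neg_one : 2 / π * -(π / 2) = -1 := by rw [mul_neg, h_one]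
  have h_fall_start : 2 - 2 / π * (π / 2) = 1 := by rw [h_one]; norm_num
  have h_fall_end : 2 - 2 / π * (3 * π / 2) = -1 := by field_simp; ring
  have h_rise : ∫ σ in -(π / 2)..π / 2, g (v σ) = (π / 2) • ∫ u in (-1 : ℝ)..1, g u := by
    rw [integral_congr (g := fun σ => g (2 / π * σ)) ?_,
      integral_comp_mul_left _ (by positivity), h_one, h_neg_one, inv_div]
    rw [uIcc_of_le (by linarith [pi_pos])]
    exact hv.eqOn_rising.comp_left
  have h_fall : ∫ σ in π / 2..3 * π / 2, g (v σ) = (π / 2) • ∫ u in (-1 : ℝ)..1, g u := by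
    rw [integral_congr (g := fun σ => g (2 - 2 / π * σ)) ?_,
      integral_comp_sub_mul _ (by positivity), h_fall_start, h_fall_end, inv_div]
    rw [uIcc_of_le (by linarith [pi_pos])]
    exact hv.eqOn_falling.comp_left
  rw [← integral_add_adjacent_intervals (hv.intervalIntegrable_comp_rising hg)
    (hv.intervalIntegrable_comp_falling hg), h_rise, h_fall, ← add_smul, add_halves]

end IsTriangleWave

theorem lyapunov_periodic_general (v : ℝ → ℝ)
    (hper : ∀ θ : ℝ, v (θ + 2*π) = v θ)
    (hA : ∀ θ : ℝ, -(π/2) ≤ θ → θ < π/2 → v θ = (2/π)*θ)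
    (hB : ∀ θ : ℝ, π/2 ≤ θ → θ < 3*π/2 → v θ = -(2/π)*θ + 2)
    (τ₁ K ω β₀ : ℝ) (hω0 : 0 < ω) (hωK : ω < K)
    (hβ₀ : β₀ = 2*ω*K/(ω^2 + K^2)) :
    ∀ x θ : ℝ,
      (1/2)*(x - τ₁*ω/K)^2
        + (τ₁/K) * ∫ σ in (0:ℝ)..(θ + 2*π), (v σ - ω/K + β₀ * |v σ - ω/K|)
      = (1/2)*(x - τ₁*ω/K)^2
        + (τ₁/K) * ∫ σ in (0:ℝ)..θ, (v σ - ω/K + β₀ * |v σ - ω/K|) := by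
  have hv : IsTriangleWave v := ⟨hper, hA, hB⟩
  have hK : 0 < K := hω0.trans hωK
  have hc : ω / K ∈ Icc (-1 : ℝ) 1 :=
    ⟨by linarith [div_pos hω0 hK], ((div_lt_one hK).mpr hωK).le⟩
  have hβ₀_balance : β₀ * (1 + (ω / K) ^ 2) = 2 * (ω / K) := by
    rw [hβ₀]
    field_simp
    ring
  have hg : Continuous fun u : ℝ => u - ω / K + β₀ * |u - ω / K| := by fun_prop
  have h_period : ∫ σ in -(π / 2)..-(π / 2) + 2 * π, (v σ - ω / K + β₀ * |v σ - ω / K|) = 0 := by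
    rw [show -(π / 2) + 2 * π = 3 * π / 2 by ring, hv.integral_comp_period hg,
      integral_sub_add_mul_abs_sub_of_mem_Icc β₀ hc, hβ₀_balance, sub_self, smul_zero]
  have h_primitive : Function.Periodic
      (fun θ => ∫ σ in (0 : ℝ)..θ, (v σ - ω / K + β₀ * |v σ - ω / K|)) (2 * π) :=
    (hv.periodic.comp _).periodic_intervalIntegral_of_integral_eq_zero
      (hv.intervalIntegrable_comp hg) 0 _ h_period
  intro x θ
  congr 2
  exact h_primitive θ

/-- The Lyapunov function V(x, θ) is 2π-periodic in θ. -/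
theorem lyapunov_periodic (v : ℝ → ℝ)
    (hper : ∀ θ : ℝ, v (θ + 2*π) = v θ)
    (hA : ∀ θ : ℝ, -(π/2) ≤ θ → θ < π/2 → v θ = (2/π)*θ)
    (hB : ∀ θ : ℝ, π/2 ≤ θ → θ < 3*π/2 → v θ = -(2/π)*θ + 2)
    (τ₁ K ω β₀ : ℝ) (hτ₁ : 0 < τ₁) (hK : 0 < K) (hω0 : 0 < ω) (hωK : ω < K)
    (hβ₀ : β₀ = 2*ω*K/(ω^2 + K^2)) :
    ∀ x θ : ℝ,
      (1/2)*(x - τ₁*ω/K)^2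
        + (τ₁/K) * ∫ σ in (0:ℝ)..(θ + 2*π), (v σ - ω/K + β₀ * |v σ - ω/K|)
      = (1/2)*(x - τ₁*ω/K)^2
        + (τ₁/K) * ∫ σ in (0:ℝ)..θ, (v σ - ω/K + β₀ * |v σ - ω/K|) :=
  lyapunov_periodic_general v hper hA hB τ₁ K ω β₀ hω0 hωK hβ₀
end

section
/- Let ξ > 1 and ρ = √(ξ² − 1). Then the function N(y, θ) = (1/2) ln( (y + (ξ−ρ)(θ−c))^{(ρ−ξ)/ρ} · (y + (ξ+ρ)(θ−c))^{(ρ+ξ)/ρ} ) is a first integral of the ODE dy/dθ = −2ξ − (θ−c)/y: along any solution y(θ) with y ≠ 0, θ ≠ c, and both arguments of the logarithm positive, d/dθ N(y(θ), θ) = 0. -/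
open Real Filter Topology

/-!
Write `u = y + (ξ - ρ)(θ - c)` and `v = y + (ξ + ρ)(θ - c)`. Since `(ξ - ρ)(ξ + ρ) = 1`, the
right-hand side of the equation factors so that `u' = -(ξ + ρ) u / y` and `v' = -(ξ - ρ) v / y`.
Hence `N = ((ρ - ξ) log u + (ρ + ξ) log v) / (2ρ)` has derivative
`-((ρ - ξ)(ξ + ρ) + (ρ + ξ)(ξ - ρ)) / (2ρy) = 0`.
-/

theorem HasDerivAt.add_mul_sub_of_ode {y : ℝ → ℝ} {α β c θ : ℝ} (hαβ : α * β = 1)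
    (hy : HasDerivAt y (-(α + β) - (θ - c) / y θ) θ) (hy0 : y θ ≠ 0) :
    HasDerivAt (fun t => y t + β * (t - c)) (-α * (y θ + β * (θ - c)) / y θ) θ := by
  have h := hy.add (((hasDerivAt_id θ).sub_const c).const_mul β)
  refine h.congr_deriv ?_
  field_simp
  linear_combination (θ - c) * hαβ

theorem HasDerivAt.log_rpow_mul_rpow {u v : ℝ → ℝ} {u' v' p q θ : ℝ}
    (hu : HasDerivAt u u' θ) (hv : HasDerivAt v v' θ) (hu0 : 0 < u θ) (hv0 : 0 < v θ) :
    HasDerivAt (fun t => Real.log (u t ^ p * v t ^ q)) (p * (u' / u θ) + q * (v' / v θ)) θ := by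
  have hpos : ∀ᶠ t in 𝓝 θ, 0 < u t ∧ 0 < v t :=
    (hu.continuousAt.eventually (lt_mem_nhds hu0)).and
      (hv.continuousAt.eventually (lt_mem_nhds hv0))
  refine (((hu.log hu0.ne').const_mul p).add ((hv.log hv0.ne').const_mul q)).congr_of_eventuallyEq ?_
  filter_upwards [hpos] with t ⟨hut, hvt⟩
  rw [log_mul (rpow_pos_of_pos hut p).ne' (rpow_pos_of_pos hvt q).ne', log_rpow hut, log_rpow hvt]
  rfl

theorem first_integral_node_general (c ξ ρ : ℝ) (hξ : 1 < ξ)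
    (hρ : ρ = Real.sqrt (ξ^2 - 1)) (a b : ℝ) (y : ℝ → ℝ)
    (hy : ∀ θ ∈ Set.Ioo a b, HasDerivAt y (-2*ξ - (θ - c)/(y θ)) θ)
    (hy0 : ∀ θ ∈ Set.Ioo a b, y θ ≠ 0)
    (hpos1 : ∀ θ ∈ Set.Ioo a b, 0 < y θ + (ξ - ρ)*(θ - c))
    (hpos2 : ∀ θ ∈ Set.Ioo a b, 0 < y θ + (ξ + ρ)*(θ - c)) :
    ∀ θ ∈ Set.Ioo a b,
      HasDerivAt (fun t =>
        (1/2) * Real.log ((y t + (ξ - ρ)*(t - c)) ^ ((ρ - ξ)/ρ)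
          * (y t + (ξ + ρ)*(t - c)) ^ ((ρ + ξ)/ρ))) 0 θ := by
  intro θ hθ
  have hyθ := hy0 θ hθ
  have hu0 := hpos1 θ hθ
  have hv0 := hpos2 θ hθ
  have hξρ : 0 < ξ ^ 2 - 1 := by nlinarith
  have hρ0 : ρ ≠ 0 := hρ ▸ (sqrt_pos.mpr hξρ).ne'
  have hρsq : ρ ^ 2 = ξ ^ 2 - 1 := hρ ▸ sq_sqrt hξρ.le
  have hprod : (ξ + ρ) * (ξ - ρ) = 1 := by linear_combination -hρsq
  have hy' : HasDerivAt y (-((ξ + ρ) + (ξ - ρ)) - (θ - c) / y θ) θ :=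
    (hy θ hθ).congr_deriv (by ring)
  have hu := hy'.add_mul_sub_of_ode hprod hyθ
  have hv := (add_comm (ξ + ρ) (ξ - ρ) ▸ hy').add_mul_sub_of_ode
    (by linear_combination hprod) hyθ
  refine ((hu.log_rpow_mul_rpow hv hu0 hv0).const_mul (1 / 2)).congr_deriv ?_
  field_simp [hu0.ne', hv0.ne']
  ring

/-- For ξ > 1, N(y, θ) is a first integral of dy/dθ = -2ξ - (θ-c)/y. -/
theorem first_integral_node (c ξ ρ : ℝ) (hξ : 1 < ξ)
    (hρ : ρ = Real.sqrt (ξ^2 - 1)) (a b : ℝ) (y : ℝ → ℝ)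
    (hy : ∀ θ ∈ Set.Ioo a b, HasDerivAt y (-2*ξ - (θ - c)/(y θ)) θ)
    (hy0 : ∀ θ ∈ Set.Ioo a b, y θ ≠ 0)
    (hc : ∀ θ ∈ Set.Ioo a b, θ ≠ c)
    (hpos1 : ∀ θ ∈ Set.Ioo a b, 0 < y θ + (ξ - ρ)*(θ - c))
    (hpos2 : ∀ θ ∈ Set.Ioo a b, 0 < y θ + (ξ + ρ)*(θ - c)) :
    ∀ θ ∈ Set.Ioo a b,
      HasDerivAt (fun t =>
        (1/2) * Real.log ((y t + (ξ - ρ)*(t - c)) ^ ((ρ - ξ)/ρ)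
          * (y t + (ξ + ρ)*(t - c)) ^ ((ρ + ξ)/ρ))) 0 θ :=
  first_integral_node_general c ξ ρ hξ hρ a b y hy hy0 hpos1 hpos2
end

section
/- Let 0 < ξ < 1 and ρ = √(1 − ξ²). Then N(y, θ) = (1/2) ln( y² + 2ξy(θ−c) + (θ−c)² ) − (ξ/ρ) arctan( (y + ξ(θ−c)) / ((θ−c)ρ) ) is a first integral of the ODE dy/dθ = −2ξ − (θ−c)/y: along any solution with y ≠ 0 and θ ≠ c, d/dθ N(y(θ), θ) = 0. -/
open Real

/-! Writing `Q = u² + 2ξuv + v² = (u + ξv)² + (ρv)²`, the partial derivatives of `N(u, v)` are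
`∂N/∂u = u / Q` and `∂N/∂v = (2ξu + v) / Q`: since `1 + ((u + ξv)/(ρv))² = Q/(ρv)²`, the arctan term
contributes just `-ξv/Q` and `+ξu/Q`. Along `u = y`, `v = θ - c` the derivative is therefore
`(y y' + 2ξy + (θ - c)) / Q`, whose numerator is zero by the ODE. -/

noncomputable def focusFirstIntegral (ξ ρ u v : ℝ) : ℝ :=
  (1/2) * Real.log (u^2 + 2*ξ*u*v + v^2) - (ξ/ρ) * Real.arctan ((u + ξ*v) / (v*ρ))

section

variable {ξ ρ : ℝ}

lemma focus_quadratic_eq (hρ : ρ^2 = 1 - ξ^2) (u v : ℝ) :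
    u^2 + 2*ξ*u*v + v^2 = (u + ξ*v)^2 + (v*ρ)^2 := by
  linear_combination (-v^2) * hρ

lemma focus_quadratic_pos (hρ : ρ^2 = 1 - ξ^2) (hρ0 : ρ ≠ 0) (u : ℝ) {v : ℝ} (hv : v ≠ 0) :
    0 < u^2 + 2*ξ*u*v + v^2 := by
  rw [focus_quadratic_eq hρ]
  have : 0 < (v*ρ)^2 := by positivity
  positivity

lemma one_add_sq_focus_ratio (hρ : ρ^2 = 1 - ξ^2) (hρ0 : ρ ≠ 0) (u : ℝ) {v : ℝ} (hv : v ≠ 0) :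
    1 + ((u + ξ*v) / (v*ρ))^2 = (u^2 + 2*ξ*u*v + v^2) / (v*ρ)^2 := by
  rw [focus_quadratic_eq hρ, add_div _ ((v*ρ)^2), div_self (by positivity), div_pow, add_comm]

theorem hasDerivAt_focusFirstIntegral_comp {u v : ℝ → ℝ} {u' v' t : ℝ}
    (hu : HasDerivAt u u' t) (hv : HasDerivAt v v' t)
    (hρ : ρ^2 = 1 - ξ^2) (hρ0 : ρ ≠ 0) (hv0 : v t ≠ 0) :
    HasDerivAt (fun s => focusFirstIntegral ξ ρ (u s) (v s))
      ((u t * u' + (2*ξ*u t + v t) * v') / (u t^2 + 2*ξ*u t*v t + v t^2)) t := by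
  have hQ := focus_quadratic_pos hρ hρ0 (u t) hv0
  have hlog := (((hu.pow 2).add ((hu.const_mul (2*ξ)).mul hv)).add (hv.pow 2)).log hQ.ne'
  have harctan := ((hu.add (hv.const_mul ξ)).div (hv.mul_const ρ) (mul_ne_zero hv0 hρ0)).arctan
  refine ((hlog.const_mul (1/2)).sub (harctan.const_mul (ξ/ρ))).congr_deriv ?_
  simp only [Pi.add_apply, Pi.mul_apply, Pi.pow_apply, Pi.div_apply]
  rw [one_add_sq_focus_ratio hρ hρ0 (u t) hv0]
  field_simp
  ring

end

/-- For 0 < ξ < 1, N(y, θ) (involving log and arctan) is a first integral of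
dy/dθ = -2ξ - (θ-c)/y. -/
theorem first_integral_focus (c ξ ρ : ℝ) (hξ0 : 0 < ξ) (hξ1 : ξ < 1)
    (hρ : ρ = Real.sqrt (1 - ξ^2)) (a b : ℝ) (y : ℝ → ℝ)
    (hy : ∀ θ ∈ Set.Ioo a b, HasDerivAt y (-2*ξ - (θ - c)/(y θ)) θ)
    (hy0 : ∀ θ ∈ Set.Ioo a b, y θ ≠ 0)
    (hc : ∀ θ ∈ Set.Ioo a b, θ ≠ c) :
    ∀ θ ∈ Set.Ioo a b,
      HasDerivAt (fun t =>
        (1/2) * Real.log ((y t)^2 + 2*ξ*(y t)*(t - c) + (t - c)^2)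
          - (ξ/ρ) * Real.arctan ((y t + ξ*(t - c)) / ((t - c)*ρ))) 0 θ := by
  intro θ hθ
  have hξ : 0 < 1 - ξ^2 := by nlinarith
  have hρ2 : ρ^2 = 1 - ξ^2 := by rw [hρ, sq_sqrt hξ.le]
  have hρ0 : ρ ≠ 0 := by rw [hρ]; exact (sqrt_pos.mpr hξ).ne'
  have hd : θ - c ≠ 0 := sub_ne_zero.mpr (hc θ hθ)
  have hN := hasDerivAt_focusFirstIntegral_comp (hy θ hθ) ((hasDerivAt_id' θ).sub_const c)
    hρ2 hρ0 hd
  have hODE : y θ * (-2*ξ - (θ - c)/(y θ)) + (2*ξ*y θ + (θ - c)) * 1 = 0 := by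
    field_simp [hy0 θ hθ]
    ring
  rw [hODE, zero_div] at hN
  exact hN
end

section
/- Let η ∈ ℝ and κ = √(η² + 1). Then M(y, θ) = (1/2) ln( (y + (θ+c)/(κ+η))^{(κ−η)/κ} · (y + (θ+c)/(η−κ))^{(κ+η)/κ} ) is a first integral of the ODE dy/dθ = 2η + (θ + c)/y: along any solution y(θ) with y ≠ 0, θ ≠ −c, and both arguments of the logarithm positive and well-defined, d/dθ M(y(θ), θ) = 0. -/
/-!
Put `x = θ + c`. The line `y = λ x` is invariant under `y' = 2η + x / y` exactly when
`λ² - 2ηλ - 1 = 0`, i.e. for `λ₁ = η - κ` and `λ₂ = η + κ`, and the two factors in the logarithm are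
`y - λ₁ x` and `y - λ₂ x`. Since `λ₁ + λ₂ = 2η` and `λ₁ λ₂ = -1`, along a solution
`log (y - λ₁ x)` has derivative `λ₂ / y` and `log (y - λ₂ x)` has derivative `λ₁ / y`, so
`λ₁ log (y - λ₁ x) - λ₂ log (y - λ₂ x)` is constant; it is `-2κ` times the first integral.
-/

open Real

section InvariantLines

variable {y : ℝ → ℝ} {l₁ l₂ c θ : ℝ}

theorem hasDerivAt_log_sub_mul_of_hasDerivAt
    (hy : HasDerivAt y (l₁ + l₂ - l₁ * l₂ * (θ + c) / y θ) θ) (hy0 : y θ ≠ 0)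
    (hl : y θ - l₁ * (θ + c) ≠ 0) :
    HasDerivAt (fun t => log (y t - l₁ * (t + c))) (l₂ / y θ) θ := by
  have hline : HasDerivAt (fun t => l₁ * (t + c)) l₁ θ := by
    simpa using ((hasDerivAt_id θ).add_const c).const_mul l₁
  refine ((hy.sub hline).log hl).congr_deriv ?_
  simp only [Pi.sub_apply]
  field_simp
  ring

theorem hasDerivAt_mul_log_sub_mul_log_of_hasDerivAt
    (hy : HasDerivAt y (l₁ + l₂ - l₁ * l₂ * (θ + c) / y θ) θ) (hy0 : y θ ≠ 0)
    (hl₁ : y θ - l₁ * (θ + c) ≠ 0) (hl₂ : y θ - l₂ * (θ + c) ≠ 0) :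
    HasDerivAt (fun t => l₁ * log (y t - l₁ * (t + c)) - l₂ * log (y t - l₂ * (t + c))) 0 θ := by
  have h₁ := hasDerivAt_log_sub_mul_of_hasDerivAt hy hy0 hl₁
  have h₂ := hasDerivAt_log_sub_mul_of_hasDerivAt (l₁ := l₂) (l₂ := l₁)
    (by rwa [add_comm l₂, mul_comm l₂]) hy0 hl₂
  exact ((h₁.const_mul l₁).sub (h₂.const_mul l₂)).congr_deriv (by ring)

end InvariantLines

theorem abs_lt_sqrt_sq_add_one (η : ℝ) : |η| < √(η ^ 2 + 1) :=
  (lt_sqrt (abs_nonneg η)).2 (by rw [sq_abs]; linarith)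

theorem first_integral_saddle_domain_general (c η κ : ℝ)
    (hκ : κ = Real.sqrt (η^2 + 1)) (a b : ℝ) (y : ℝ → ℝ)
    (hy : ∀ θ ∈ Set.Ioo a b, HasDerivAt y (2*η + (θ + c)/(y θ)) θ)
    (hy0 : ∀ θ ∈ Set.Ioo a b, y θ ≠ 0)
    (hpos1 : ∀ θ ∈ Set.Ioo a b, 0 < y θ + (θ + c)/(κ + η))
    (hpos2 : ∀ θ ∈ Set.Ioo a b, 0 < y θ + (θ + c)/(η - κ)) :
    ∀ θ ∈ Set.Ioo a b,
      HasDerivAt (fun t =>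
        (1/2) * Real.log ((y t + (t + c)/(κ + η)) ^ ((κ - η)/κ)
          * (y t + (t + c)/(η - κ)) ^ ((κ + η)/κ))) 0 θ := by
  intro θ hθ
  obtain ⟨hκη, hηκ⟩ := abs_lt.1 (hκ ▸ abs_lt_sqrt_sq_add_one η)
  have hκ2 : κ ^ 2 = η ^ 2 + 1 := hκ ▸ sq_sqrt (by positivity)
  have hline₁ (t : ℝ) : y t + (t + c) / (κ + η) = y t - (η - κ) * (t + c) := by
    field_simp [show κ + η ≠ 0 by linarith]
    linear_combination -(t + c) * hκ2
  have hline₂ (t : ℝ) : y t + (t + c) / (η - κ) = y t - (η + κ) * (t + c) := by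
    field_simp [show η - κ ≠ 0 by linarith]
    linear_combination -(t + c) * hκ2
  have hode : HasDerivAt y ((η - κ) + (η + κ) - (η - κ) * (η + κ) * (θ + c) / y θ) θ :=
    (hy θ hθ).congr_deriv (by linear_combination -(θ + c) / y θ * hκ2)
  have hM := (hasDerivAt_mul_log_sub_mul_log_of_hasDerivAt hode (hy0 θ hθ)
    (hline₁ θ ▸ (hpos1 θ hθ).ne') (hline₂ θ ▸ (hpos2 θ hθ).ne')).const_mul
    (-1 / (2 * κ))
  rw [mul_zero] at hM
  refine hM.congr_of_eventuallyEq ?_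
  filter_upwards [isOpen_Ioo.mem_nhds hθ] with t ht
  have hu := hpos1 t ht
  have hv := hpos2 t ht
  rw [log_mul (rpow_pos_of_pos hu _).ne' (rpow_pos_of_pos hv _).ne', log_rpow hu, log_rpow hv,
    hline₁, hline₂]
  field_simp [show κ ≠ 0 by linarith]
  ring

/-- M(y, θ) is a first integral of dy/dθ = 2η + (θ+c)/y, where κ = √(η²+1). -/
theorem first_integral_saddle_domain (c η κ : ℝ)
    (hκ : κ = Real.sqrt (η^2 + 1)) (a b : ℝ) (y : ℝ → ℝ)
    (hy : ∀ θ ∈ Set.Ioo a b, HasDerivAt y (2*η + (θ + c)/(y θ)) θ)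
    (hy0 : ∀ θ ∈ Set.Ioo a b, y θ ≠ 0)
    (hc : ∀ θ ∈ Set.Ioo a b, θ + c ≠ 0)
    (hpos1 : ∀ θ ∈ Set.Ioo a b, 0 < y θ + (θ + c)/(κ + η))
    (hpos2 : ∀ θ ∈ Set.Ioo a b, 0 < y θ + (θ + c)/(η - κ)) :
    ∀ θ ∈ Set.Ioo a b,
      HasDerivAt (fun t =>
        (1/2) * Real.log ((y t + (t + c)/(κ + η)) ^ ((κ - η)/κ)
          * (y t + (t + c)/(η - κ)) ^ ((κ + η)/κ))) 0 θ :=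
  first_integral_saddle_domain_general c η κ hκ a b y hy hy0 hpos1 hpos2
end
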